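/- Let f be a concave size function, let S* be an optimal solution to f-DS, and write k* = |S*|. Let (x*, y*) be an optimal solution to LP_{k*}, i.e., a feasible solution whose objective value is at least that of every feasible solution. For r ∈ ℝ, let S(r) = {v ∈ V : y*_v ≥ r}. Then there exists a real number r ∈ (0, 1] such that S(r) is nonempty and w(S(r))/f(|S(r)|) ≥ w(S)/f(|S|) for every nonempty S ⊆ V; that is, some level set of y* is an optimal solution to f-DS. -/

import Mathlib

structure WGraph (V : Type) [Fintype V] [DecidableEq V] where
  E : Finset (Sym2 V)
  not_diag : ∀ e ∈ E, ¬ e.IsDiag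
  w : Sym2 V → ℝ
  w_pos : ∀ e ∈ E, 0 < w e

variable {V : Type} [Fintype V] [DecidableEq V]

def WGraph.wS (G : WGraph V) (S : Finset V) : ℝ :=
  ∑ e ∈ G.E.filter (fun e => e ∈ S.sym2), G.w e

def WGraph.deg (G : WGraph V) (S : Finset V) (v : V) : ℝ :=
  ∑ u ∈ S.filter (fun u => s(u, v) ∈ G.E), G.w s(u, v)

def LPfeas (G : WGraph V) (k : ℕ) (x : Sym2 V → ℝ) (y : V → ℝ) : Prop :=
  (∑ v : V, y v = (k : ℝ)) ∧
  (∀ e ∈ G.E, ∀ v ∈ e, x e ≤ y v) ∧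
  (∀ e ∈ G.E, 0 ≤ x e ∧ x e ≤ 1) ∧
  (∀ v : V, 0 ≤ y v ∧ y v ≤ 1)

/-!
Let `0 < t₁ < ⋯ < t_m` be the positive values of `y*` and `t₀ = 0`. Then
`y* = ∑ᵢ (tᵢ - tᵢ₋₁) 𝟙_{S(tᵢ)}`, and since `x*_e ≤ min (y*_u) (y*_v)` the LP value is at most
`∑ᵢ (tᵢ - tᵢ₋₁) w(S(tᵢ))`; it is at least `w(S*)` because the indicator of `S*` is feasible.
The same weights satisfy `∑ᵢ (tᵢ - tᵢ₋₁) |S(tᵢ)| = k*` and `∑ᵢ (tᵢ - tᵢ₋₁) = t_m ≤ 1`, so the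
supergradient inequality of the concave `f` at `k*`, together with `f 0 = 0`, gives
`∑ᵢ (tᵢ - tᵢ₋₁) f(|S(tᵢ)|) ≤ f(k*)`. Comparing the two weighted sums, the level set with the
best ratio has ratio at least `w(S*) / f(k*)`.
-/

open Finset

-- For `t = tᵢ ∈ P` this is `tᵢ₋₁` in the notation above.
noncomputable def lowerNeighbor (P : Finset ℝ) (t : ℝ) : ℝ :=
  (insert 0 (P.filter (· < t))).max' (insert_nonempty _ _)

section LayerCake

variable (P : Finset ℝ)

theorem lowerNeighbor_lt {t : ℝ} (ht : 0 < t) : lowerNeighbor P t < t := by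
  refine (max'_lt_iff _ _).mpr fun s hs => ?_
  rcases mem_insert.mp hs with rfl | hs
  · exact ht
  · exact (mem_filter.mp hs).2

theorem lowerNeighbor_mem (t : ℝ) : lowerNeighbor P t ∈ insert 0 P :=
  insert_subset_insert 0 (filter_subset _ P) (max'_mem _ _)

theorem le_lowerNeighbor {s t : ℝ} (hs : s ∈ P) (hst : s < t) : s ≤ lowerNeighbor P t :=
  le_max' _ _ (mem_insert_of_mem (mem_filter.mpr ⟨hs, hst⟩))

variable {P}

theorem sum_filter_le_sub_lowerNeighbor (hP : ∀ t ∈ P, 0 < t) (a : ℝ)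
    (ha : a ∈ insert 0 P) :
    ∑ t ∈ P with t ≤ a, (t - lowerNeighbor P t) = a := by
  rcases mem_insert.mp ha with rfl | haP
  · rw [filter_false_of_mem fun t ht => not_le.mpr (hP t ht), sum_empty]
  set b := lowerNeighbor P a
  have hba : b < a := lowerNeighbor_lt P (hP a haP)
  have hnot : a ∉ P.filter (· ≤ b) := fun h => not_le.mpr hba (mem_filter.mp h).2
  have hsplit : P.filter (· ≤ a) = insert a (P.filter (· ≤ b)) := by
    ext t
    simp only [mem_insert, mem_filter]
    constructor
    · rintro ⟨htP, hta⟩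
      exact hta.eq_or_lt.imp id fun hlt => ⟨htP, le_lowerNeighbor P htP hlt⟩
    · rintro (rfl | ⟨htP, htb⟩)
      exacts [⟨haP, le_rfl⟩, ⟨htP, htb.trans hba.le⟩]
  have hfewer : #(P.filter (· ≤ b)) < #(P.filter (· ≤ a)) := by
    rw [hsplit, card_insert_of_notMem hnot]; omega
  rw [hsplit, sum_insert hnot, sum_filter_le_sub_lowerNeighbor hP b (lowerNeighbor_mem P a)]
  ring
termination_by #(P.filter (· ≤ a))

theorem sum_sub_lowerNeighbor_eq_max' (hP : ∀ t ∈ P, 0 < t) (hne : P.Nonempty) :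
    ∑ t ∈ P, (t - lowerNeighbor P t) = P.max' hne := by
  have hall : P.filter (· ≤ P.max' hne) = P := filter_true_of_mem fun t ht => le_max' P t ht
  simpa only [hall] using
    sum_filter_le_sub_lowerNeighbor hP _ (mem_insert_of_mem (max'_mem P hne))

theorem sum_sub_lowerNeighbor_mul_sum_filter_le {ι : Type*} (hP : ∀ t ∈ P, 0 < t)
    (s : Finset ι) (a c : ι → ℝ) (ha : ∀ i ∈ s, a i ∈ insert 0 P) :
    ∑ t ∈ P, (t - lowerNeighbor P t) * ∑ i ∈ s with t ≤ a i, c i = ∑ i ∈ s, c i * a i := by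
  simp_rw [mul_sum, sum_filter]
  rw [sum_comm]
  refine sum_congr rfl fun i hi => ?_
  rw [← sum_filter, ← sum_mul, sum_filter_le_sub_lowerNeighbor hP _ (ha i hi), mul_comm]

end LayerCake

section Concave

variable {f : ℕ → ℝ}

theorem antitone_sub_of_concave (hconc : ∀ x : ℕ, f x - 2 * f (x + 1) + f (x + 2) ≤ 0) :
    Antitone fun i => f (i + 1) - f i :=
  antitone_nat_of_succ_le fun n => by linarith [hconc n]

theorem le_add_mul_sub_of_concave (hconc : ∀ x : ℕ, f x - 2 * f (x + 1) + f (x + 2) ≤ 0)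
    (k s : ℕ) : f s ≤ f k + (f (k + 1) - f k) * ((s : ℝ) - k) := by
  have hd := antitone_sub_of_concave hconc
  rcases le_total k s with hks | hsk
  · induction s, hks using Nat.le_induction with
    | base => simp
    | succ s hks ih =>
      have := hd hks
      push_cast
      linarith
  · induction hsk using Nat.decreasingInduction with
    | self => simp
    | of_succ s hsk ih =>
      have := hd hsk.le
      push_cast at ih
      linarith

theorem sum_mul_le_of_concave (hmono : Monotone f) (hf0 : f 0 = 0)
    (hconc : ∀ x : ℕ, f x - 2 * f (x + 1) + f (x + 2) ≤ 0) {ι : Type*} (s : Finset ι)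
    (c : ι → ℝ) (n : ι → ℕ) (k : ℕ) (hc : ∀ i ∈ s, 0 ≤ c i) (hc1 : ∑ i ∈ s, c i ≤ 1)
    (hk : ∑ i ∈ s, c i * n i = k) : ∑ i ∈ s, c i * f (n i) ≤ f k := by
  set d := f (k + 1) - f k
  have hd : 0 ≤ d := sub_nonneg.mpr (hmono k.le_succ)
  have hdk : d * k ≤ f k := by
    have := le_add_mul_sub_of_concave hconc k 0
    rw [hf0] at this
    push_cast at this
    linarith
  calc ∑ i ∈ s, c i * f (n i)
      ≤ ∑ i ∈ s, c i * (f k + d * ((n i : ℝ) - k)) :=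
        sum_le_sum fun i hi => mul_le_mul_of_nonneg_left
          (le_add_mul_sub_of_concave hconc k (n i)) (hc i hi)
    _ = (f k - d * k) * ∑ i ∈ s, c i + d * ∑ i ∈ s, c i * n i := by
        rw [mul_sum, mul_sum, ← sum_add_distrib]
        exact sum_congr rfl fun i _ => by ring
    _ ≤ (f k - d * k) * 1 + d * k := by
        rw [hk]
        gcongr
    _ = f k := by ring

end Concave

theorem exists_le_div_of_sum_mul_le {ι : Type*} {s : Finset ι} (hs : s.Nonempty)
    {c a b : ι → ℝ} {A B : ℝ} (hc : ∀ i ∈ s, 0 ≤ c i) (ha : ∀ i ∈ s, 0 ≤ a i)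
    (hb : ∀ i ∈ s, 0 < b i) (hB : 0 < B) (hA : A ≤ ∑ i ∈ s, c i * a i)
    (hcb : ∑ i ∈ s, c i * b i ≤ B) : ∃ i ∈ s, A / B ≤ a i / b i := by
  obtain ⟨j, hj, hmax⟩ := exists_max_image s (fun i => a i / b i) hs
  refine ⟨j, hj, (div_le_iff₀ hB).mpr ?_⟩
  have hμ : 0 ≤ a j / b j := div_nonneg (ha j hj) (hb j hj).le
  calc A ≤ ∑ i ∈ s, c i * a i := hA
    _ ≤ ∑ i ∈ s, c i * (a j / b j * b i) := sum_le_sum fun i hi =>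
        mul_le_mul_of_nonneg_left ((div_le_iff₀ (hb i hi)).mp (hmax i hi)) (hc i hi)
    _ = a j / b j * ∑ i ∈ s, c i * b i := by
        rw [mul_sum]; exact sum_congr rfl fun i _ => by ring
    _ ≤ a j / b j * B := mul_le_mul_of_nonneg_left hcb hμ

noncomputable def levelSet (y : V → ℝ) (t : ℝ) : Finset V := univ.filter fun v => t ≤ y v

noncomputable def posValues (y : V → ℝ) : Finset ℝ := (univ.image y).filter (0 < ·)

def edgeMin (y : V → ℝ) : Sym2 V → ℝ :=
  Sym2.lift ⟨fun u v => min (y u) (y v), fun _ _ => min_comm _ _⟩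

omit [DecidableEq V] in
theorem mem_posValues {y : V → ℝ} {t : ℝ} : t ∈ posValues y ↔ (∃ v, y v = t) ∧ 0 < t := by
  simp [posValues]

omit [DecidableEq V] in
theorem pos_of_mem_posValues {y : V → ℝ} {t : ℝ} (ht : t ∈ posValues y) : 0 < t :=
  (mem_posValues.mp ht).2

omit [DecidableEq V] in
theorem levelSet_nonempty {y : V → ℝ} {t : ℝ} (ht : t ∈ posValues y) :
    (levelSet y t).Nonempty := by
  obtain ⟨⟨v, rfl⟩, -⟩ := mem_posValues.mp ht
  exact ⟨v, by simp [levelSet]⟩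

omit [DecidableEq V] in
theorem mem_sym2_levelSet_iff (y : V → ℝ) (t : ℝ) (e : Sym2 V) :
    e ∈ (levelSet y t).sym2 ↔ t ≤ edgeMin y e := by
  induction e using Sym2.inductionOn with
  | hf u v => simp [levelSet, edgeMin]

omit [Fintype V] [DecidableEq V] in
theorem edgeMin_mem {y : V → ℝ} {A : Set ℝ} (hy : ∀ v, y v ∈ A) (e : Sym2 V) :
    edgeMin y e ∈ A := by
  induction e using Sym2.inductionOn with
  | hf u v => rcases min_choice (y u) (y v) with h | h <;> simp [edgeMin, h, hy]

namespace WGraph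

variable (G : WGraph V)

theorem wS_nonneg (S : Finset V) : 0 ≤ G.wS S :=
  sum_nonneg fun e he => (G.w_pos e (mem_filter.mp he).1).le

theorem wS_levelSet (y : V → ℝ) (t : ℝ) :
    G.wS (levelSet y t) = ∑ e ∈ G.E with t ≤ edgeMin y e, G.w e := by
  simp only [wS, mem_sym2_levelSet_iff]

theorem wS_eq_sum_mul_indicator (S : Finset V) :
    G.wS S = ∑ e ∈ G.E, G.w e * if e ∈ S.sym2 then 1 else 0 := by
  simp [wS, sum_filter]

end WGraph

namespace LPfeas

theorem indicator (G : WGraph V) (S : Finset V) :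
    LPfeas G #S (fun e => if e ∈ S.sym2 then 1 else 0) (fun v => if v ∈ S then 1 else 0) := by
  refine ⟨by simp, fun e _ v hv => ?_, fun e _ => by dsimp only; split_ifs <;> norm_num,
    fun v => by dsimp only; split_ifs <;> norm_num⟩
  dsimp only
  split_ifs with he hv' <;> norm_num
  exact hv' (mem_sym2_iff.mp he v hv)

variable {G : WGraph V} {k : ℕ} {x : Sym2 V → ℝ} {y : V → ℝ} (h : LPfeas G k x y)
include h

theorem le_edgeMin {e : Sym2 V} (he : e ∈ G.E) : x e ≤ edgeMin y e := by
  induction e using Sym2.inductionOn with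
  | hf u v =>
    exact le_min (h.2.1 _ he u (Sym2.mem_mk_left u v)) (h.2.1 _ he v (Sym2.mem_mk_right u v))

theorem mem_insert_posValues (v : V) : y v ∈ insert 0 (posValues y) :=
  (h.2.2.2 v).1.eq_or_lt.elim (fun h0 => mem_insert.mpr (Or.inl h0.symm))
    fun hpos => mem_insert_of_mem (mem_posValues.mpr ⟨⟨v, rfl⟩, hpos⟩)

theorem le_one_of_mem_posValues {t : ℝ} (ht : t ∈ posValues y) : t ≤ 1 := by
  obtain ⟨⟨v, rfl⟩, -⟩ := mem_posValues.mp ht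
  exact (h.2.2.2 v).2

theorem sum_sub_lowerNeighbor_mul_card_levelSet :
    ∑ t ∈ posValues y, (t - lowerNeighbor (posValues y) t) * #(levelSet y t) = k := by
  simpa [levelSet, ← h.1] using sum_sub_lowerNeighbor_mul_sum_filter_le
    (fun _ => pos_of_mem_posValues) univ y 1 fun v _ => h.mem_insert_posValues v

theorem sum_sub_lowerNeighbor_le_one :
    ∑ t ∈ posValues y, (t - lowerNeighbor (posValues y) t) ≤ 1 := by
  rcases (posValues y).eq_empty_or_nonempty with hP | hP
  · simp [hP]
  rw [sum_sub_lowerNeighbor_eq_max' (fun _ => pos_of_mem_posValues) hP]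
  exact h.le_one_of_mem_posValues (max'_mem _ hP)

theorem sum_mul_le_sum_sub_lowerNeighbor_mul_wS_levelSet :
    ∑ e ∈ G.E, G.w e * x e ≤
      ∑ t ∈ posValues y, (t - lowerNeighbor (posValues y) t) * G.wS (levelSet y t) := by
  simp only [G.wS_levelSet]
  rw [sum_sub_lowerNeighbor_mul_sum_filter_le (fun _ => pos_of_mem_posValues) _ _ _
    fun e _ => edgeMin_mem h.mem_insert_posValues e]
  exact sum_le_sum fun e he => mul_le_mul_of_nonneg_left (h.le_edgeMin he) (G.w_pos e he).le

end LPfeas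

theorem wS_le_of_LP_optimal {G : WGraph V} (S : Finset V) {x : Sym2 V → ℝ}
    (hLPopt : ∀ (x' : Sym2 V → ℝ) (y' : V → ℝ), LPfeas G #S x' y' →
      ∑ e ∈ G.E, G.w e * x' e ≤ ∑ e ∈ G.E, G.w e * x e) :
    G.wS S ≤ ∑ e ∈ G.E, G.w e * x e :=
  G.wS_eq_sum_mul_indicator S ▸ hLPopt _ _ (LPfeas.indicator G S)

theorem stmt16_general (G : WGraph V)
    (f : ℕ → ℝ) (hmono : Monotone f) (hf0 : f 0 = 0) (hfpos : ∀ x, 1 ≤ x → 0 < f x)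
    (hconc : ∀ x : ℕ, f x - 2 * f (x + 1) + f (x + 2) ≤ 0)
    (Sstar : Finset V) (hne : Sstar.Nonempty)
    (hopt : ∀ S : Finset V, S.Nonempty → G.wS S / f S.card ≤ G.wS Sstar / f Sstar.card)
    (x : Sym2 V → ℝ) (y : V → ℝ) (hfeas : LPfeas G Sstar.card x y)
    (hLPopt : ∀ (x' : Sym2 V → ℝ) (y' : V → ℝ), LPfeas G Sstar.card x' y' →
      ∑ e ∈ G.E, G.w e * x' e ≤ ∑ e ∈ G.E, G.w e * x e) :
    ∃ r : ℝ, 0 < r ∧ r ≤ 1 ∧ (Finset.univ.filter (fun v => r ≤ y v)).Nonempty ∧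
      ∀ S : Finset V, S.Nonempty →
        G.wS S / f S.card ≤
          G.wS (Finset.univ.filter (fun v => r ≤ y v)) /
            f (Finset.univ.filter (fun v => r ≤ y v)).card := by
  set P := posValues y
  have hcard := hfeas.sum_sub_lowerNeighbor_mul_card_levelSet
  have hPne : P.Nonempty := by
    refine nonempty_iff_ne_empty.mpr fun hP => card_ne_zero.mpr hne ?_
    simpa [P, hP, eq_comm] using hcard
  have hgaps : ∀ t ∈ P, 0 ≤ t - lowerNeighbor P t := fun t ht =>
    sub_nonneg.mpr (lowerNeighbor_lt P (pos_of_mem_posValues ht)).le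
  have hsize : ∑ t ∈ P, (t - lowerNeighbor P t) * f #(levelSet y t) ≤ f #Sstar :=
    sum_mul_le_of_concave hmono hf0 hconc P _ _ _ hgaps
      hfeas.sum_sub_lowerNeighbor_le_one hcard
  obtain ⟨r, hr, hle⟩ := exists_le_div_of_sum_mul_le hPne hgaps (fun _ _ => G.wS_nonneg _)
    (fun t ht => hfpos _ (card_pos.mpr (levelSet_nonempty ht))) (hfpos _ (card_pos.mpr hne))
    ((wS_le_of_LP_optimal Sstar hLPopt).trans
      hfeas.sum_mul_le_sum_sub_lowerNeighbor_mul_wS_levelSet) hsize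
  exact ⟨r, pos_of_mem_posValues hr, hfeas.le_one_of_mem_posValues hr, levelSet_nonempty hr,
    fun S hS => (hopt S hS).trans hle⟩

theorem stmt16 (G : WGraph V) (hE : G.E.Nonempty)
    (f : ℕ → ℝ) (hmono : Monotone f) (hf0 : f 0 = 0) (hfpos : ∀ x, 1 ≤ x → 0 < f x)
    (hconc : ∀ x : ℕ, f x - 2 * f (x + 1) + f (x + 2) ≤ 0)
    (Sstar : Finset V) (hne : Sstar.Nonempty)
    (hopt : ∀ S : Finset V, S.Nonempty → G.wS S / f S.card ≤ G.wS Sstar / f Sstar.card)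
    (x : Sym2 V → ℝ) (y : V → ℝ) (hfeas : LPfeas G Sstar.card x y)
    (hLPopt : ∀ (x' : Sym2 V → ℝ) (y' : V → ℝ), LPfeas G Sstar.card x' y' →
      ∑ e ∈ G.E, G.w e * x' e ≤ ∑ e ∈ G.E, G.w e * x e) :
    ∃ r : ℝ, 0 < r ∧ r ≤ 1 ∧ (Finset.univ.filter (fun v => r ≤ y v)).Nonempty ∧
      ∀ S : Finset V, S.Nonempty →
        G.wS S / f S.card ≤
          G.wS (Finset.univ.filter (fun v => r ≤ y v)) /
            f (Finset.univ.filter (fun v => r ≤ y v)).card :=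
  stmt16_general G f hmono hf0 hfpos hconc Sstar hne hopt x y hfeas hLPopt
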